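/- arXiv:2201.04308 — 8 statements merged into one kernel-verified Lean document; each statement's English description precedes it below -/
import Mathlib

section
/- The inclusion S_I ⊆ S* can be strict: there exists a network with three players and arcs (2,1), (2,3), with θ_i = 0, L_i = 1 for all i and ξ_{21} = ξ_{23} = 2, such that the independently secured set is {2} while the network-optimal secured set is {1, 2, 3}. -/
open Finset

/-- In-neighbors of `i`: players `j` with an arc `(j, i)`. -/
def inN {V : Type*} [Fintype V] (A : V → V → Prop) [DecidableRel A] (i : V) : Finset V :=
  Finset.univ.filter fun j => A j i

/-- Total network security cost when exactly the players in `S` are secured. -/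
noncomputable def netCost {V : Type*} [Fintype V] [DecidableEq V]
    (A : V → V → Prop) [DecidableRel A] (θ L : V → ℝ) (ξ : V → V → ℝ)
    (S : Finset V) : ℝ :=
  ∑ i ∈ S, (θ i + ∑ j ∈ inN A i \ S, ξ j i) + ∑ i ∈ Finset.univ \ S, L i

/-!
Players 1 and 3 see an incoming arc cost of 2 against a penalty of 1, so only player 2 secures
on its own. In the network cost, however, an arc is charged only when its source is unsecured, so
securing everybody costs `∑ θ = 0`, whereas leaving any player unsecured costs at least its
penalty 1.
-/

section NetCost

variable {V : Type*} [Fintype V] [DecidableEq V] (A : V → V → Prop) [DecidableRel A]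
  (θ L : V → ℝ) (ξ : V → V → ℝ)

theorem netCost_univ : netCost A θ L ξ univ = ∑ i, θ i := by
  simp [netCost, sdiff_eq_empty_iff_subset.mpr (subset_univ _)]

theorem sum_add_sum_le_netCost (hξ : ∀ j i, 0 ≤ ξ j i) (S : Finset V) :
    ∑ i ∈ S, θ i + ∑ i ∈ univ \ S, L i ≤ netCost A θ L ξ S := by
  have hinternal : ∑ i ∈ S, θ i ≤ ∑ i ∈ S, (θ i + ∑ j ∈ inN A i \ S, ξ j i) :=
    sum_le_sum fun i _ => le_add_of_nonneg_right (sum_nonneg fun j _ => hξ j i)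
  unfold netCost
  linarith

theorem netCost_univ_lt (hθL : ∀ i, θ i < L i) (hξ : ∀ j i, 0 ≤ ξ j i) {S : Finset V}
    (hS : S ≠ univ) : netCost A θ L ξ univ < netCost A θ L ξ S := by
  have hout : (univ \ S).Nonempty := by
    rwa [sdiff_nonempty, univ_subset_iff]
  calc netCost A θ L ξ univ = ∑ i ∈ S, θ i + ∑ i ∈ univ \ S, θ i := by
        rw [netCost_univ, ← sum_sdiff (subset_univ S), add_comm]
    _ < ∑ i ∈ S, θ i + ∑ i ∈ univ \ S, L i :=
        add_lt_add_right (sum_lt_sum_of_nonempty hout fun i _ => hθL i) _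
    _ ≤ netCost A θ L ξ S := sum_add_sum_le_netCost A θ L ξ hξ S

theorem netCost_univ_le (hθL : ∀ i, θ i < L i) (hξ : ∀ j i, 0 ≤ ξ j i) (S : Finset V) :
    netCost A θ L ξ univ ≤ netCost A θ L ξ S := by
  rcases eq_or_ne S univ with rfl | hS
  · exact le_rfl
  · exact (netCost_univ_lt A θ L ξ hθL hξ hS).le

end NetCost

theorem indepSecured_iff_inN_eq_empty {V : Type*} [Fintype V] (A : V → V → Prop)
    [DecidableRel A] (θ L : V → ℝ) (ξ : V → V → ℝ) (hθ : ∀ i, θ i = 0) (hL : ∀ i, L i = 1)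
    (hξ : ∀ i j, ξ i j = 2) (i : V) :
    θ i + ∑ j ∈ inN A i, ξ j i ≤ L i ↔ inN A i = ∅ := by
  simp only [hθ, hL, hξ, sum_const, nsmul_eq_mul, zero_add, ← card_eq_zero]
  constructor
  · intro h
    have : (inN A i).card < 1 := by exact_mod_cast (by linarith : ((inN A i).card : ℝ) < 1)
    omega
  · intro h
    simp [h]

/-- Players `0, 1, 2` play the roles of the paper's players `1, 2, 3`. -/
theorem indep_strict_subset_example
    (A : Fin 3 → Fin 3 → Prop) [DecidableRel A]
    (hA : ∀ j i, A j i ↔ ((j, i) = ((1 : Fin 3), (0 : Fin 3)) ∨ (j, i) = (1, 2)))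
    (θ L : Fin 3 → ℝ) (ξ : Fin 3 → Fin 3 → ℝ)
    (hθ : ∀ i, θ i = 0) (hL : ∀ i, L i = 1) (hξ : ∀ i j, ξ i j = 2) :
    (Finset.univ.filter
        (fun i => θ i + ∑ j ∈ inN A i, ξ j i ≤ L i) = {(1 : Fin 3)}) ∧
    (∀ S : Finset (Fin 3), netCost A θ L ξ Finset.univ ≤ netCost A θ L ξ S) ∧
    (∀ S : Finset (Fin 3), S ≠ Finset.univ →
        netCost A θ L ξ Finset.univ < netCost A θ L ξ S) := by
  have hθL : ∀ i, θ i < L i := fun i => by simp [hθ, hL]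
  have hξ_nonneg : ∀ j i, 0 ≤ ξ j i := fun j i => by simp [hξ]
  refine ⟨?_, netCost_univ_le A θ L ξ hθL hξ_nonneg,
    fun S hS => netCost_univ_lt A θ L ξ hθL hξ_nonneg hS⟩
  ext i
  rw [mem_filter, indepSecured_iff_inN_eq_empty A θ L ξ hθ hL hξ, inN, filter_eq_empty_iff]
  fin_cases i <;> simp [hA]
end

section
/- The network-optimal security cost U(G) equals the weight of the minimum s-ℓ cut in the auxiliary network G*, and if (X, X̄) is a minimum cut with s ∈ X, then the network-optimal secured set is S* = N \ X. -/
open Finset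

/-- Nodes of the auxiliary network `G*`: the players, plus a source
`Sum.inr false = s` and a sink `Sum.inr true = ℓ`. -/
abbrev AuxNode (V : Type*) := V ⊕ Bool

/-- Arc weights of the auxiliary network `G*`: `s → i` with weight `θ i`,
`i → j` with weight `ξ i j` for each arc `(i,j) ∈ A`, and `i → ℓ` with
weight `L i`; all other pairs have weight `0`. -/
noncomputable def auxW {V : Type*} (A : V → V → Prop) [DecidableRel A]
    (θ L : V → ℝ) (ξ : V → V → ℝ) : AuxNode V → AuxNode V → ℝ
  | Sum.inr false, Sum.inl i => θ i
  | Sum.inl i, Sum.inl j => if A i j then ξ i j else 0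
  | Sum.inl i, Sum.inr true => L i
  | _, _ => 0

/-- Weight of the cut `(X, X̄)` in `G*`: total weight of arcs from `X` to its
complement. -/
noncomputable def cutWeight {V : Type*} [Fintype V] [DecidableEq V]
    (A : V → V → Prop) [DecidableRel A] (θ L : V → ℝ) (ξ : V → V → ℝ)
    (X : Finset (AuxNode V)) : ℝ :=
  ∑ a ∈ X, ∑ b ∈ Finset.univ \ X, auxW A θ L ξ a b

/-!
Cuts `(X, X̄)` of `G*` with `s ∈ X`, `ℓ ∉ X` correspond bijectively to secured sets via
`S = N \ X`, and such a cut weighs exactly the cost of `S`: it cuts `s → i` (weight `θ i`) for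
`i ∈ S`, `i → ℓ` (weight `L i`) for `i ∉ S`, and `j → i` (weight `ξ j i`) for `j ∉ S`, `i ∈ S`.
Hence a minimum cut yields a cost-minimal secured set, of cost equal to the cut weight.
-/

section AuxNetwork

variable {V : Type*} [Fintype V] [DecidableEq V]

def cutOfSecured (S : Finset V) : Finset (AuxNode V) :=
  insert (Sum.inr false) ((univ \ S).image Sum.inl)

/-- The secured set `S* = N \ X` read off a cut `(X, X̄)`. -/
def securedOfCut (X : Finset (AuxNode V)) : Finset V :=
  univ.filter fun i => (Sum.inl i : AuxNode V) ∉ X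

lemma source_mem_cutOfSecured (S : Finset V) : (Sum.inr false : AuxNode V) ∈ cutOfSecured S :=
  mem_insert_self _ _

lemma sink_notMem_cutOfSecured (S : Finset V) : (Sum.inr true : AuxNode V) ∉ cutOfSecured S := by
  simp [cutOfSecured]

lemma cutOfSecured_securedOfCut {X : Finset (AuxNode V)}
    (hs : (Sum.inr false : AuxNode V) ∈ X) (hl : (Sum.inr true : AuxNode V) ∉ X) :
    cutOfSecured (securedOfCut X) = X := by
  ext (i | _ | _) <;> simp [cutOfSecured, securedOfCut, hs, hl]

lemma compl_cutOfSecured (S : Finset V) :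
    univ \ cutOfSecured S = insert (Sum.inr true) (S.image Sum.inl) := by
  ext (i | _ | _) <;> simp [cutOfSecured]

variable (A : V → V → Prop) [DecidableRel A] (θ L : V → ℝ) (ξ : V → V → ℝ)

lemma sum_compl_sum_arc_eq_sum_inN (S : Finset V) :
    ∑ i ∈ univ \ S, ∑ j ∈ S, (if A i j then ξ i j else 0) = ∑ j ∈ S, ∑ i ∈ inN A j \ S, ξ i j := by
  rw [sum_comm]
  refine sum_congr rfl fun j _ => ?_
  have : inN A j \ S = (univ \ S).filter (A · j) := by
    ext i; simp [inN, and_comm]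
  rw [this, sum_filter]

lemma cutWeight_cutOfSecured (S : Finset V) :
    cutWeight A θ L ξ (cutOfSecured S) = netCost A θ L ξ S := by
  have hs : (Sum.inr false : AuxNode V) ∉ (univ \ S).image Sum.inl := by simp
  have hl : (Sum.inr true : AuxNode V) ∉ S.image Sum.inl := by simp
  have from_source : ∑ b ∈ insert (Sum.inr true) (S.image Sum.inl), auxW A θ L ξ (Sum.inr false) b
      = ∑ j ∈ S, θ j := by
    rw [sum_insert hl, sum_image Sum.inl_injective.injOn]
    simp [auxW]
  have from_player : ∀ i : V, ∑ b ∈ insert (Sum.inr true) (S.image Sum.inl), auxW A θ L ξ (Sum.inl i) b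
      = L i + ∑ j ∈ S, if A i j then ξ i j else 0 := by
    intro i
    rw [sum_insert hl, sum_image Sum.inl_injective.injOn]
    rfl
  rw [cutWeight, compl_cutOfSecured, cutOfSecured, sum_insert hs, sum_image Sum.inl_injective.injOn,
    from_source]
  simp only [from_player, sum_add_distrib, sum_compl_sum_arc_eq_sum_inN, netCost]
  ring

end AuxNetwork

theorem min_cut_gives_network_optimal_general {V : Type*} [Fintype V] [DecidableEq V]
    (A : V → V → Prop) [DecidableRel A] (θ L : V → ℝ) (ξ : V → V → ℝ)
    (X : Finset (AuxNode V))
    (hs : (Sum.inr false : AuxNode V) ∈ X) (hl : (Sum.inr true : AuxNode V) ∉ X)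
    (hmin : ∀ Y : Finset (AuxNode V),
      (Sum.inr false : AuxNode V) ∈ Y → (Sum.inr true : AuxNode V) ∉ Y →
      cutWeight A θ L ξ X ≤ cutWeight A θ L ξ Y) :
    (∀ T : Finset V,
        netCost A θ L ξ (Finset.univ.filter fun i => (Sum.inl i : AuxNode V) ∉ X) ≤
          netCost A θ L ξ T) ∧
    cutWeight A θ L ξ X =
      netCost A θ L ξ (Finset.univ.filter fun i => (Sum.inl i : AuxNode V) ∉ X) := by
  have hX : cutWeight A θ L ξ X = netCost A θ L ξ (securedOfCut X) := by
    rw [← cutWeight_cutOfSecured, cutOfSecured_securedOfCut hs hl]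
  refine ⟨fun T => ?_, hX⟩
  calc netCost A θ L ξ (securedOfCut X) = cutWeight A θ L ξ X := hX.symm
    _ ≤ cutWeight A θ L ξ (cutOfSecured T) :=
        hmin _ (source_mem_cutOfSecured T) (sink_notMem_cutOfSecured T)
    _ = netCost A θ L ξ T := cutWeight_cutOfSecured A θ L ξ T

/-- if `(X, X̄)` is a minimum-weight `s`-`ℓ` cut of the auxiliary
network `G*`, then `S* = N \ X` is a network-optimal secured set and the
network-optimal security cost `U(G)` equals the weight of the cut. -/
theorem min_cut_gives_network_optimal {V : Type*} [Fintype V] [DecidableEq V]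
    (A : V → V → Prop) [DecidableRel A] (θ L : V → ℝ) (ξ : V → V → ℝ)
    (hθ : ∀ i, 0 ≤ θ i) (hL : ∀ i, 0 ≤ L i) (hξ : ∀ i j, 0 ≤ ξ i j)
    (X : Finset (AuxNode V))
    (hs : (Sum.inr false : AuxNode V) ∈ X) (hl : (Sum.inr true : AuxNode V) ∉ X)
    (hmin : ∀ Y : Finset (AuxNode V),
      (Sum.inr false : AuxNode V) ∈ Y → (Sum.inr true : AuxNode V) ∉ Y →
      cutWeight A θ L ξ X ≤ cutWeight A θ L ξ Y) :
    (∀ T : Finset V,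
        netCost A θ L ξ (Finset.univ.filter fun i => (Sum.inl i : AuxNode V) ∉ X) ≤
          netCost A θ L ξ T) ∧
    cutWeight A θ L ξ X =
      netCost A θ L ξ (Finset.univ.filter fun i => (Sum.inl i : AuxNode V) ∉ X) :=
  min_cut_gives_network_optimal_general A θ L ξ X hs hl hmin
end

section
/- The coalition-optimal secured set is monotone: if a player i in coalition S is secured under the coalition-optimal security strategy for S, then i is also secured under the coalition-optimal security strategy for any coalition T with S ⊆ T ⊆ N. -/
open Finset

/-- Cost incurred by a coalition `S` when exactly the players of `W ⊆ S` are
secured: secured players pay intrinsic cost plus link costs from unsecured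
in-neighbors (worst-case beliefs about players outside the coalition), and
unsecured coalition members pay their penalties. -/
noncomputable def coalCost {V : Type*} [Fintype V] [DecidableEq V]
    (A : V → V → Prop) [DecidableRel A] (θ L : V → ℝ) (ξ : V → V → ℝ)
    (S W : Finset V) : ℝ :=
  ∑ i ∈ W, (θ i + ∑ j ∈ inN A i \ W, ξ j i) + ∑ i ∈ S \ W, L i

/-! Topkis' argument: the cost function has the submodularity-type property
`c_T(W₁ ∪ W₂) + c_S(W₁ ∩ W₂) ≤ c_S(W₁) + c_T(W₂)` for `W₁ ⊆ S ⊆ T`, `W₂ ⊆ T`. The node costs are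
modular, the penalties of unsecured members are modular once `S ⊆ T`, and the link costs form a
directed cut function, which is submodular because `ξ ≥ 0`. Applied to optimal `W₁ = Υ(S)` and
`W₂ = Υ(T)`, optimality of `W₁` forces `W₁ ∪ W₂` to be optimal for `T`, hence contained in the
maximal optimum `W₂`. -/

lemma le_of_map_sup_add_map_inf_le {α β : Type*} [Lattice α] [AddCommMonoid β] [PartialOrder β]
    [IsOrderedCancelAddMonoid β] {f g : α → β} {P Q : α → Prop} {a b : α}
    (h : f (a ⊔ b) + g (a ⊓ b) ≤ g a + f b) (hP : P (a ⊔ b)) (hQ : Q (a ⊓ b))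
    (ha : ∀ x, Q x → g a ≤ g x) (hb : ∀ x, P x → f b ≤ f x)
    (hb_max : ∀ x, P x → (∀ y, P y → f x ≤ f y) → x ≤ b) : a ≤ b := by
  have hsup_le : f (a ⊔ b) ≤ f b :=
    le_of_add_le_add_right <| calc
      f (a ⊔ b) + g (a ⊓ b) ≤ g a + f b := h
      _ ≤ g (a ⊓ b) + f b := add_le_add_left (ha _ hQ) _
      _ = f b + g (a ⊓ b) := add_comm _ _
  exact le_sup_left.trans <| hb_max _ hP fun y hy ↦ hsup_le.trans (hb y hy)

section
variable {V : Type*} [DecidableEq V]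

lemma ite_cut_union_add_inter_le {W₁ W₂ : Finset V} {i j : V} {x : ℝ} (hx : 0 ≤ x) :
    ((if i ∈ W₁ ∪ W₂ ∧ j ∉ W₁ ∪ W₂ then x else 0) +
      if i ∈ W₁ ∩ W₂ ∧ j ∉ W₁ ∩ W₂ then x else 0) ≤
    (if i ∈ W₁ ∧ j ∉ W₁ then x else 0) + if i ∈ W₂ ∧ j ∉ W₂ then x else 0 := by
  simp only [mem_union, mem_inter]
  split_ifs <;> grind

lemma sum_sdiff_union_add_sum_sdiff_inter {M : Type*} [AddCommGroup M] (f : V → M)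
    {S T W₁ W₂ : Finset V} (hW₁ : W₁ ⊆ S) (hST : S ⊆ T) (hW₂ : W₂ ⊆ T) :
    ∑ i ∈ T \ (W₁ ∪ W₂), f i + ∑ i ∈ S \ (W₁ ∩ W₂), f i =
      ∑ i ∈ S \ W₁, f i + ∑ i ∈ T \ W₂, f i := by
  rw [sum_sdiff_eq_sub (union_subset (hW₁.trans hST) hW₂),
    sum_sdiff_eq_sub (inter_subset_left.trans hW₁), sum_sdiff_eq_sub hW₁, sum_sdiff_eq_sub hW₂,
    eq_sub_of_add_eq (sum_union_inter (f := f))]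
  abel

variable [Fintype V]

def cutCost (N : V → Finset V) (ξ : V → V → ℝ) (W : Finset V) : ℝ :=
  ∑ i ∈ W, ∑ j ∈ N i \ W, ξ j i

lemma cutCost_eq_sum_ite (N : V → Finset V) (ξ : V → V → ℝ) (W : Finset V) :
    cutCost N ξ W = ∑ i, ∑ j ∈ N i, if i ∈ W ∧ j ∉ W then ξ j i else 0 := by
  simp only [cutCost, sdiff_eq_filter, sum_filter, ite_and, sum_ite_irrel, sum_const_zero]
  rw [sum_ite_mem, univ_inter]

lemma cutCost_union_add_inter_le (N : V → Finset V) {ξ : V → V → ℝ} (hξ : ∀ i j, 0 ≤ ξ i j)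
    (W₁ W₂ : Finset V) :
    cutCost N ξ (W₁ ∪ W₂) + cutCost N ξ (W₁ ∩ W₂) ≤ cutCost N ξ W₁ + cutCost N ξ W₂ := by
  simp only [cutCost_eq_sum_ite, ← Finset.sum_add_distrib]
  exact sum_le_sum fun i _ ↦ sum_le_sum fun j _ ↦ ite_cut_union_add_inter_le (hξ j i)

variable (A : V → V → Prop) [DecidableRel A] (θ L : V → ℝ) (ξ : V → V → ℝ)

lemma coalCost_eq (S W : Finset V) :
    coalCost A θ L ξ S W = ∑ i ∈ W, θ i + cutCost (inN A) ξ W + ∑ i ∈ S \ W, L i := by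
  rw [coalCost, sum_add_distrib, cutCost]

lemma coalCost_union_add_inter_le (hξ : ∀ i j, 0 ≤ ξ i j) {S T W₁ W₂ : Finset V}
    (hW₁ : W₁ ⊆ S) (hST : S ⊆ T) (hW₂ : W₂ ⊆ T) :
    coalCost A θ L ξ T (W₁ ∪ W₂) + coalCost A θ L ξ S (W₁ ∩ W₂) ≤
      coalCost A θ L ξ S W₁ + coalCost A θ L ξ T W₂ := by
  simp only [coalCost_eq]
  have hθ := sum_union_inter (f := θ) (s₁ := W₁) (s₂ := W₂)
  have hcut := cutCost_union_add_inter_le (inN A) hξ W₁ W₂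
  have hL := sum_sdiff_union_add_sum_sdiff_inter L hW₁ hST hW₂
  linarith

end

theorem coalition_secured_monotone_general {V : Type*} [Fintype V] [DecidableEq V]
    (A : V → V → Prop) [DecidableRel A] (θ L : V → ℝ) (ξ : V → V → ℝ)
    (hξ : ∀ i j, 0 ≤ ξ i j)
    (S T : Finset V) (hST : S ⊆ T)
    (WS WT : Finset V)
    (hWSsub : WS ⊆ S) (hWTsub : WT ⊆ T)
    -- `WS` is optimal for `S` …
    (hWSopt : ∀ W ⊆ S, coalCost A θ L ξ S WS ≤ coalCost A θ L ξ S W)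
    -- `WT` is optimal for `T` …
    (hWTopt : ∀ W ⊆ T, coalCost A θ L ξ T WT ≤ coalCost A θ L ξ T W)
    -- … and maximal among optimal secured sets of `T`
    (hWTmax : ∀ W ⊆ T, (∀ W' ⊆ T, coalCost A θ L ξ T W ≤ coalCost A θ L ξ T W') →
      W ⊆ WT) :
    WS ⊆ WT :=
  le_of_map_sup_add_map_inf_le (P := (· ⊆ T)) (Q := (· ⊆ S))
    (coalCost_union_add_inter_le A θ L ξ hξ hWSsub hST hWTsub)
    (union_subset (hWSsub.trans hST) hWTsub) (inter_subset_left.trans hWSsub)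
    hWSopt hWTopt hWTmax

/-- monotonicity of the coalition-optimal secured set.  If `WS` is
the maximal optimal secured set of coalition `S` and `WT` the maximal optimal
secured set of coalition `T ⊇ S`, then `WS ⊆ WT`; in particular every player
secured under the coalition-optimal strategy for `S` is secured under the
coalition-optimal strategy for `T`. -/
theorem coalition_secured_monotone {V : Type*} [Fintype V] [DecidableEq V]
    (A : V → V → Prop) [DecidableRel A] (θ L : V → ℝ) (ξ : V → V → ℝ)
    (hθ : ∀ i, 0 ≤ θ i) (hL : ∀ i, 0 ≤ L i) (hξ : ∀ i j, 0 ≤ ξ i j)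
    (S T : Finset V) (hST : S ⊆ T)
    (WS WT : Finset V)
    (hWSsub : WS ⊆ S) (hWTsub : WT ⊆ T)
    -- `WS` is optimal for `S` …
    (hWSopt : ∀ W ⊆ S, coalCost A θ L ξ S WS ≤ coalCost A θ L ξ S W)
    -- … and maximal among optimal secured sets of `S`
    (hWSmax : ∀ W ⊆ S, (∀ W' ⊆ S, coalCost A θ L ξ S W ≤ coalCost A θ L ξ S W') →
      W ⊆ WS)
    -- `WT` is optimal for `T` …
    (hWTopt : ∀ W ⊆ T, coalCost A θ L ξ T WT ≤ coalCost A θ L ξ T W)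
    -- … and maximal among optimal secured sets of `T`
    (hWTmax : ∀ W ⊆ T, (∀ W' ⊆ T, coalCost A θ L ξ T W ≤ coalCost A θ L ξ T W') →
      W ⊆ WT) :
    WS ⊆ WT :=
  coalition_secured_monotone_general A θ L ξ hξ S T hST WS WT hWSsub hWTsub hWSopt hWTopt hWTmax
end

section
/- If every player i satisfies L_i > θ_i + Σ_{j ∈ N⁻(i)} ξ_{ji}, then the Shapley value of the interdependent security cost-sharing game allocates to player i exactly Φ_i = θ_i + Σ_{j ∈ N⁻(i)} ξ_{ji}/2 − Σ_{j ∈ N⁺(i)} ξ_{ij}/2. -/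
open Finset

/-- Out-neighbors of `i`: players `j` with an arc `(i, j)`. -/
def outN {V : Type*} [Fintype V] (A : V → V → Prop) [DecidableRel A] (i : V) : Finset V :=
  Finset.univ.filter fun j => A i j

/-- Coalition-optimal security cost `c(S) = min_{W ⊆ S} coalCost S W`. -/
noncomputable def cCoal {V : Type*} [Fintype V] [DecidableEq V]
    (A : V → V → Prop) [DecidableRel A] (θ L : V → ℝ) (ξ : V → V → ℝ)
    (S : Finset V) : ℝ :=
  (S.powerset.image (coalCost A θ L ξ S)).min'
    (Finset.Nonempty.image ⟨∅, Finset.empty_mem_powerset S⟩ _)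

/-- The Shapley value of player `i` in the cost game `(N, c)`:
`Φ_i = Σ_{S ∋ i} ((|S|−1)!(n−|S|)!/n!) (c(S) − c(S \ {i}))`. -/
noncomputable def shapley {V : Type*} [Fintype V] [DecidableEq V]
    (c : Finset V → ℝ) (i : V) : ℝ :=
  ∑ S ∈ Finset.univ.powerset.filter (fun S => i ∈ S),
    (((S.card - 1).factorial : ℝ) * ((Fintype.card V - S.card).factorial : ℝ) /
        ((Fintype.card V).factorial : ℝ)) * (c S - c (S.erase i))

/-! Since a penalty exceeds everything a player could pay when secured, every coalition secures
all its members, so `c(S) = Σ_{k ∈ S} θ_k + Σ_{arcs j → k, k ∈ S, j ∉ S} ξ_{jk}` is a linear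
combination of the games `[k ∈ S]` and `[k ∈ S ∧ j ∉ S]`. The Shapley value is linear, gives
the first game entirely to `k`, and in the second only `k` (joining while `j` is out) and `j`
(joining while `k` is in) have nonzero marginal contributions. The complementation
`T ↦ (N \ {i}) \ T` preserves Shapley weights and swaps `j ∈ T` with `j ∉ T`, so each of these
events has total weight `1/2`. -/

section ShapleyValue

variable {V : Type*} [Fintype V] [DecidableEq V]

/-- `t! (n-1-t)! / n!` is the probability that, in a uniformly random order of `n` players, a
fixed player arrives right after exactly the players of a given `t`-set. -/
noncomputable def shapleyWeight (n t : ℕ) : ℝ :=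
  (t.factorial * (n - 1 - t).factorial : ℝ) / n.factorial

theorem shapleyWeight_sub_one_sub {n t : ℕ} (ht : t ≤ n - 1) :
    shapleyWeight n (n - 1 - t) = shapleyWeight n t := by
  rw [shapleyWeight, shapleyWeight, Nat.sub_sub_self ht, mul_comm]

theorem sum_powerset_shapleyWeight {α : Type*} (U : Finset α) :
    ∑ T ∈ U.powerset, shapleyWeight (#U + 1) #T = 1 := by
  rw [sum_powerset_apply_card (fun t => shapleyWeight (#U + 1) t)]
  have hterm : ∀ t ∈ range (#U + 1),
      (#U).choose t • shapleyWeight (#U + 1) t = 1 / (#U + 1 : ℝ) := by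
    intro t ht
    have htU : t ≤ #U := Nat.lt_succ_iff.mp (mem_range.mp ht)
    rw [nsmul_eq_mul, shapleyWeight, Nat.add_sub_cancel, Nat.factorial_succ,
      ← Nat.choose_mul_factorial_mul_factorial htU]
    have hchoose : ((#U).choose t : ℝ) ≠ 0 := by exact_mod_cast (Nat.choose_pos htU).ne'
    push_cast
    field_simp
  rw [sum_congr rfl hterm, sum_const, card_range, nsmul_eq_mul]
  push_cast
  field_simp

theorem sum_powerset_filter_mem_shapleyWeight_eq_notMem {α : Type*} [DecidableEq α]
    {U : Finset α} {j : α} (hj : j ∈ U) :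
    ∑ T ∈ U.powerset with j ∈ T, shapleyWeight (#U + 1) #T =
      ∑ T ∈ U.powerset with j ∉ T, shapleyWeight (#U + 1) #T := by
  refine sum_nbij' (U \ ·) (U \ ·) (fun T hT => by simp_all) (fun T hT => by simp_all)
    (fun T hT => by simp_all) (fun T hT => by simp_all) fun T hT => ?_
  rw [mem_filter, mem_powerset] at hT
  rw [card_sdiff_of_subset hT.1, ← shapleyWeight_sub_one_sub (card_le_card hT.1),
    Nat.add_sub_cancel]

theorem sum_powerset_filter_notMem_shapleyWeight {α : Type*} [DecidableEq α]
    {U : Finset α} {j : α} (hj : j ∈ U) :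
    ∑ T ∈ U.powerset with j ∉ T, shapleyWeight (#U + 1) #T = 1 / 2 := by
  have h := sum_filter_add_sum_filter_not U.powerset (j ∈ ·) (fun T => shapleyWeight (#U + 1) #T)
  rw [sum_powerset_shapleyWeight, sum_powerset_filter_mem_shapleyWeight_eq_notMem hj] at h
  linarith

theorem sum_powerset_filter_mem_shapleyWeight {α : Type*} [DecidableEq α]
    {U : Finset α} {j : α} (hj : j ∈ U) :
    ∑ T ∈ U.powerset with j ∈ T, shapleyWeight (#U + 1) #T = 1 / 2 := by
  rw [sum_powerset_filter_mem_shapleyWeight_eq_notMem hj,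
    sum_powerset_filter_notMem_shapleyWeight hj]

theorem shapley_eq_sum_powerset_erase (c : Finset V → ℝ) (i : V) :
    shapley c i = ∑ T ∈ (univ.erase i).powerset,
      shapleyWeight (#(univ.erase i) + 1) #T * (c (insert i T) - c T) := by
  rw [card_erase_add_one (mem_univ i), card_univ, shapley]
  symm
  apply sum_nbij' (insert i) (·.erase i)
  · intro T hT
    simp
  · intro S _
    exact mem_powerset.mpr (erase_subset_erase i (subset_univ S))
  · intro T hT
    exact erase_insert fun h => by simpa using mem_powerset.mp hT h
  · intro S hS
    simp_all
  · intro T hT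
    have hiT : i ∉ T := fun h => by simpa using mem_powerset.mp hT h
    rw [card_insert_of_notMem hiT, erase_insert hiT, shapleyWeight, Nat.add_sub_cancel,
      Nat.sub_sub, add_comm 1]

theorem shapley_add (c d : Finset V → ℝ) (i : V) :
    shapley (fun S => c S + d S) i = shapley c i + shapley d i := by
  simp only [shapley, ← sum_add_distrib]
  exact sum_congr rfl fun _ _ => by ring

theorem shapley_const_mul (a : ℝ) (c : Finset V → ℝ) (i : V) :
    shapley (fun S => a * c S) i = a * shapley c i := by
  simp only [shapley, mul_sum]
  exact sum_congr rfl fun _ _ => by ring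

theorem shapley_sum {ι : Type*} (s : Finset ι) (c : ι → Finset V → ℝ) (i : V) :
    shapley (fun S => ∑ x ∈ s, c x S) i = ∑ x ∈ s, shapley (c x) i := by
  simp only [shapley, ← sum_sub_distrib, mul_sum]
  exact sum_comm

theorem shapley_ite_mem (k i : V) :
    shapley (fun S => if k ∈ S then 1 else 0) i = if i = k then 1 else 0 := by
  rw [shapley_eq_sum_powerset_erase]
  by_cases hik : i = k
  · subst hik
    rw [if_pos rfl]
    refine (sum_congr rfl fun T hT => ?_).trans (sum_powerset_shapleyWeight _)
    have hiT : i ∉ T := fun h => by simpa using mem_powerset.mp hT h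
    simp [hiT]
  · rw [if_neg hik]
    refine sum_eq_zero fun T _ => ?_
    simp [Ne.symm hik]

theorem shapley_ite_mem_and_notMem (j k i : V) :
    shapley (fun S => if k ∈ S ∧ j ∉ S then 1 else 0) i =
      ((if i = k then 1 else 0) - (if i = j then 1 else 0)) / 2 := by
  rcases eq_or_ne j k with rfl | hjk
  · simp only [and_not_self, if_false]
    simp [shapley]
  rw [shapley_eq_sum_powerset_erase]
  have hiT : ∀ T ∈ (univ.erase i).powerset, i ∉ T :=
    fun T hT h => by simpa using mem_powerset.mp hT h
  by_cases hik : i = k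
  · subst hik
    rw [if_pos rfl, if_neg hjk.symm, sub_zero,
      ← sum_powerset_filter_notMem_shapleyWeight (mem_erase.mpr ⟨hjk, mem_univ j⟩), sum_filter]
    refine sum_congr rfl fun T hT => ?_
    simp [hiT T hT, hjk]
  by_cases hij : i = j
  · subst hij
    rw [if_neg hik, if_pos rfl, zero_sub, neg_div,
      ← sum_powerset_filter_mem_shapleyWeight (mem_erase.mpr ⟨Ne.symm hik, mem_univ k⟩),
      sum_filter, ← sum_neg_distrib]
    refine sum_congr rfl fun T hT => ?_
    simp [hiT T hT, Ne.symm hik]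
  · rw [if_neg hik, if_neg hij, sub_zero, zero_div]
    refine sum_eq_zero fun T _ => ?_
    simp [Ne.symm hik, Ne.symm hij]

end ShapleyValue

section SecurityGame

variable {V : Type*} [Fintype V] [DecidableEq V] {A : V → V → Prop} [DecidableRel A]
  {θ L : V → ℝ} {ξ : V → V → ℝ}

theorem coalCost_self (S : Finset V) :
    coalCost A θ L ξ S S = ∑ k ∈ S, (θ k + ∑ j ∈ inN A k \ S, ξ j k) := by
  simp [coalCost]

/-- Securing a member `k` costs at most `L k`, and it can only lower the arc costs of the others. -/
theorem coalCost_self_le (hξ : ∀ i j, 0 ≤ ξ i j)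
    (hL : ∀ k, θ k + ∑ j ∈ inN A k, ξ j k ≤ L k) {S W : Finset V} (hW : W ⊆ S) :
    coalCost A θ L ξ S S ≤ coalCost A θ L ξ S W := by
  rw [coalCost_self, coalCost, ← sum_sdiff hW]
  have hsecured : ∑ k ∈ W, (θ k + ∑ j ∈ inN A k \ S, ξ j k)
      ≤ ∑ k ∈ W, (θ k + ∑ j ∈ inN A k \ W, ξ j k) :=
    sum_le_sum fun k _ => add_le_add_right (sum_le_sum_of_subset_of_nonneg
      (sdiff_subset_sdiff subset_rfl hW) fun j _ _ => hξ j k) _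
  have hunsecured : ∑ k ∈ S \ W, (θ k + ∑ j ∈ inN A k \ S, ξ j k) ≤ ∑ k ∈ S \ W, L k :=
    sum_le_sum fun k _ => (add_le_add_right (sum_le_sum_of_subset_of_nonneg sdiff_subset
      fun j _ _ => hξ j k) _).trans (hL k)
  linarith

theorem cCoal_eq_coalCost_self (hξ : ∀ i j, 0 ≤ ξ i j)
    (hL : ∀ k, θ k + ∑ j ∈ inN A k, ξ j k ≤ L k) (S : Finset V) :
    cCoal A θ L ξ S = coalCost A θ L ξ S S :=
  le_antisymm (min'_le _ _ (mem_image_of_mem _ (mem_powerset_self S)))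
    (le_min' _ _ _ (forall_mem_image.2 fun _ hW => coalCost_self_le hξ hL (mem_powerset.1 hW)))

theorem coalCost_self_eq_sum_ite (S : Finset V) :
    coalCost A θ L ξ S S = ∑ k, (θ k * (if k ∈ S then 1 else 0) +
      ∑ j ∈ inN A k, ξ j k * (if k ∈ S ∧ j ∉ S then 1 else 0)) := by
  rw [coalCost_self, ← sum_subset (subset_univ S)]
  · refine sum_congr rfl fun k hk => ?_
    simp [hk, sum_filter, sdiff_eq_filter]
  · intro k _ hk
    simp [hk]

theorem sum_ite_mem_inN (f : V → ℝ) (i : V) :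
    ∑ k, (if i ∈ inN A k then f k else 0) = ∑ k ∈ outN A i, f k := by
  simp [inN, outN, sum_filter]

end SecurityGame

theorem shapley_large_penalties_general {V : Type*} [Fintype V] [DecidableEq V]
    (A : V → V → Prop) [DecidableRel A] (θ L : V → ℝ) (ξ : V → V → ℝ)
    (hξ : ∀ i j, 0 ≤ ξ i j)
    (hbig : ∀ i, θ i + ∑ j ∈ inN A i, ξ j i < L i) (i : V) :
    shapley (cCoal A θ L ξ) i =
      θ i + (∑ j ∈ inN A i, ξ j i) / 2 - (∑ j ∈ outN A i, ξ i j) / 2 := by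
  have hcost : cCoal A θ L ξ = fun S => ∑ k, (θ k * (if k ∈ S then 1 else 0) +
      ∑ j ∈ inN A k, ξ j k * (if k ∈ S ∧ j ∉ S then 1 else 0)) := funext fun S => by
    rw [cCoal_eq_coalCost_self hξ (fun k => (hbig k).le), coalCost_self_eq_sum_ite]
  rw [hcost, shapley_sum]
  simp only [shapley_add, shapley_const_mul, shapley_sum, shapley_ite_mem,
    shapley_ite_mem_and_notMem]
  simp only [mul_div_assoc', mul_sub, sub_div, mul_ite, mul_one, mul_zero, ite_div, zero_div,
    sum_add_distrib, sum_sub_distrib, sum_ite_irrel, sum_const_zero, sum_ite_eq, mem_univ,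
    if_true, sum_ite_mem_inN, sum_div]
  ring

/-- if every player `i` satisfies `L i > θ i + ∑_{j∈N⁻(i)} ξ j i`,
the Shapley value of the interdependent security cost-sharing game is
`Φ_i = θ_i + Σ_{j ∈ N⁻(i)} ξ_{ji}/2 − Σ_{j ∈ N⁺(i)} ξ_{ij}/2`. -/
theorem shapley_large_penalties {V : Type*} [Fintype V] [DecidableEq V]
    (A : V → V → Prop) [DecidableRel A] (θ L : V → ℝ) (ξ : V → V → ℝ)
    (hθ : ∀ i, 0 ≤ θ i) (hL : ∀ i, 0 ≤ L i) (hξ : ∀ i j, 0 ≤ ξ i j)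
    (hbig : ∀ i, θ i + ∑ j ∈ inN A i, ξ j i < L i) (i : V) :
    shapley (cCoal A θ L ξ) i =
      θ i + (∑ j ∈ inN A i, ξ j i) / 2 - (∑ j ∈ outN A i, ξ i j) / 2 :=
  shapley_large_penalties_general A θ L ξ hξ hbig i
end

section
/- In a convex (submodular) cost game, for every permutation π of the players, the marginal-vector allocation x_{π_i} = c({π_1, …, π_i}) − c({π_1, …, π_{i−1}}) belongs to the core. -/
/-!
Order the players by an injective rank `f`. For any coalition `S`, the marginal costs of its
members, each taken with respect to its predecessors inside `S`, telescope to `c S - c ∅`.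
The marginal vector takes each marginal cost with respect to all predecessors instead, a larger
coalition, so by submodularity its entries are no larger; summing gives the core inequality,
with equality for the grand coalition.
-/

open Finset

/-- Given an ordering `σ : Fin n ≃ V` of the players, the marginal-vector
allocation assigns to player `i` its marginal cost contribution to the
coalition of all players preceding it:
`x_i = c({predecessors of i, inclusive}) − c({strict predecessors of i})`. -/
noncomputable def marginalVector {V : Type*} [Fintype V] [DecidableEq V]
    (c : Finset V → ℝ) (σ : Fin (Fintype.card V) ≃ V) (i : V) : ℝ :=
  c (Finset.univ.filter fun j => σ.symm j ≤ σ.symm i) -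
    c (Finset.univ.filter fun j => σ.symm j < σ.symm i)

open Function

section RankedMarginals

variable {V α G : Type*} [DecidableEq V] [LinearOrder α] {f : V → α}

theorem filter_le_eq_insert_filter_lt (hf : Injective f) {S : Finset V} {i : V} (hi : i ∈ S) :
    S.filter (fun j => f j ≤ f i) = insert i (S.filter fun j => f j < f i) := by
  ext j
  simp only [mem_filter, mem_insert]
  constructor
  · rintro ⟨hj, hle⟩
    rcases hle.lt_or_eq with hlt | heq
    · exact Or.inr ⟨hj, hlt⟩
    · exact Or.inl (hf heq)
  · rintro (rfl | ⟨hj, hlt⟩)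
    · exact ⟨hi, le_rfl⟩
    · exact ⟨hj, hlt.le⟩

theorem sum_filter_le_sub_filter_lt [AddCommGroup G] (c : Finset V → G) (hf : Injective f)
    (S : Finset V) :
    ∑ i ∈ S, (c (S.filter fun j => f j ≤ f i) - c (S.filter fun j => f j < f i)) = c S - c ∅ := by
  induction S using Finset.induction_on_max_value f with
  | empty => simp
  | insert m S hm hmax ih =>
    have hlt : ∀ i ∈ S, f i < f m := fun i hi =>
      (hmax i hi).lt_of_ne (hf.ne (ne_of_mem_of_not_mem hi hm))
    have hle_m : (insert m S).filter (fun j => f j ≤ f m) = insert m S :=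
      filter_true_of_mem fun j hj => (mem_insert.1 hj).elim (fun h => h ▸ le_rfl)
        fun hj => (hlt j hj).le
    have hlt_m : (insert m S).filter (fun j => f j < f m) = S := by
      rw [filter_insert, if_neg (lt_irrefl _), filter_true_of_mem hlt]
    have hterm : ∀ i ∈ S,
        c ((insert m S).filter fun j => f j ≤ f i) - c ((insert m S).filter fun j => f j < f i) =
          c (S.filter fun j => f j ≤ f i) - c (S.filter fun j => f j < f i) := fun i hi => by
      rw [filter_insert, if_neg (hlt i hi).not_ge, filter_insert, if_neg (hlt i hi).not_gt]
    rw [sum_insert hm, sum_congr rfl hterm, ih, hle_m, hlt_m]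
    abel

theorem sum_sub_filter_lt_le [Fintype V] [AddCommGroup G] [PartialOrder G] [IsOrderedAddMonoid G]
    (c : Finset V → G)
    (hconv : ∀ S T : Finset V, ∀ i : V, S ⊆ T → i ∉ T →
      c (insert i T) - c T ≤ c (insert i S) - c S)
    (hf : Injective f) (S : Finset V) :
    ∑ i ∈ S, (c (insert i (univ.filter fun j => f j < f i)) - c (univ.filter fun j => f j < f i))
      ≤ c S - c ∅ := by
  rw [← sum_filter_le_sub_filter_lt c hf S]
  refine sum_le_sum fun i hi => ?_
  rw [filter_le_eq_insert_filter_lt hf hi]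
  exact hconv _ _ i (filter_subset_filter _ (subset_univ S)) (by simp)

end RankedMarginals

/-- in a convex (submodular) cost game with `c(∅) = 0`, for every
permutation (ordering) of the players, the marginal-vector allocation is
efficient and lies in the core. -/
theorem marginal_vector_mem_core {V : Type*} [Fintype V] [DecidableEq V]
    (c : Finset V → ℝ) (h0 : c ∅ = 0)
    (hconv : ∀ S T : Finset V, ∀ i : V, S ⊆ T → i ∉ T →
      c (insert i T) - c T ≤ c (insert i S) - c S)
    (σ : Fin (Fintype.card V) ≃ V) :
    (∑ i, marginalVector c σ i = c Finset.univ) ∧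
    (∀ S : Finset V, ∑ i ∈ S, marginalVector c σ i ≤ c S) := by
  have hmarg : ∀ i, marginalVector c σ i =
      c (insert i (univ.filter fun j => σ.symm j < σ.symm i)) -
        c (univ.filter fun j => σ.symm j < σ.symm i) := fun i => by
    rw [marginalVector, filter_le_eq_insert_filter_lt σ.symm.injective (mem_univ i)]
  refine ⟨?_, fun S => ?_⟩
  · rw [← sub_zero (c univ), ← h0]
    exact sum_filter_le_sub_filter_lt c σ.symm.injective univ
  · simp_rw [hmarg]
    simpa only [h0, sub_zero] using sum_sub_filter_lt_le c hconv σ.symm.injective S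
end

section
/- Every member of a δ-minimal rational security set V of a coalition S is secured under the coalition-optimal security strategy of S ∪ V. -/
/-! If some `b ∈ B` were left unsecured by an optimal secured set `W` of `S ∪ B`, then `W` is
still admissible for `S ∪ (B.erase b)` at cost `c(S ∪ B) - L b`. Hence `B.erase b` would already
be a rational security set of `S`, and it is smaller than `B`, contradicting minimality. -/

open Finset

section CoalitionCost

variable {V : Type*} [Fintype V] [DecidableEq V]
  (A : V → V → Prop) [DecidableRel A] (θ L : V → ℝ) (ξ : V → V → ℝ)

theorem cCoal_le_coalCost {T W : Finset V} (hW : W ⊆ T) :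
    cCoal A θ L ξ T ≤ coalCost A θ L ξ T W :=
  min'_le _ _ (mem_image_of_mem _ (mem_powerset.mpr hW))

theorem coalCost_insert_of_notMem {T W : Finset V} {b : V} (hbT : b ∉ T) (hbW : b ∉ W) :
    coalCost A θ L ξ (insert b T) W = coalCost A θ L ξ T W + L b := by
  unfold coalCost
  rw [insert_sdiff_of_notMem _ hbW, sum_insert fun h => hbT (mem_sdiff.mp h).1]
  ring

theorem cCoal_erase_add_le_of_optimal {T W : Finset V} {b : V} (hWT : W ⊆ T) (hbT : b ∈ T)
    (hbW : b ∉ W) (hWopt : coalCost A θ L ξ T W = cCoal A θ L ξ T) :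
    cCoal A θ L ξ (T.erase b) + L b ≤ cCoal A θ L ξ T := by
  have hW : W ⊆ T.erase b := fun x hx => mem_erase.mpr ⟨fun h => hbW (h ▸ hx), hWT hx⟩
  calc cCoal A θ L ξ (T.erase b) + L b ≤ coalCost A θ L ξ (T.erase b) W + L b := by
        gcongr; exact cCoal_le_coalCost A θ L ξ hW
    _ = coalCost A θ L ξ T W := by
        rw [← coalCost_insert_of_notMem A θ L ξ (notMem_erase b T) hbW, insert_erase hbT]
    _ = cCoal A θ L ξ T := hWopt

end CoalitionCost

theorem minimal_rational_security_set_secured_general {V : Type*} [Fintype V] [DecidableEq V]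
    (A : V → V → Prop) [DecidableRel A] (θ L : V → ℝ) (ξ : V → V → ℝ)
    (S B : Finset V) (δstar : ℕ)
    (hdisj : Disjoint B S) (hcard : B.card = δstar)
    (hrat : cCoal A θ L ξ (S ∪ B) < cCoal A θ L ξ S + ∑ v ∈ B, L v)
    (hmin : ∀ W : Finset V, Disjoint W S → W.card < δstar →
      ¬ (cCoal A θ L ξ (S ∪ W) < cCoal A θ L ξ S + ∑ v ∈ W, L v))
    (W : Finset V) (hWsub : W ⊆ S ∪ B)
    (hWopt : coalCost A θ L ξ (S ∪ B) W = cCoal A θ L ξ (S ∪ B)) :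
    B ⊆ W := by
  intro b hb
  by_contra hbW
  have hbS : b ∉ S := disjoint_left.mp hdisj hb
  have hunsecured :=
    cCoal_erase_add_le_of_optimal A θ L ξ hWsub (mem_union_right S hb) hbW hWopt
  rw [erase_union_distrib, erase_eq_of_notMem hbS] at hunsecured
  have hsum : L b + ∑ v ∈ B.erase b, L v = ∑ v ∈ B, L v := add_sum_erase B L hb
  have hsmaller : (B.erase b).card < δstar := by
    rw [card_erase_of_mem hb, hcard]
    exact Nat.sub_lt (hcard ▸ card_pos.mpr ⟨b, hb⟩) one_pos
  exact hmin (B.erase b) (disjoint_of_subset_left (erase_subset b B) hdisj) hsmaller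
    (by linarith)

/-- every member of a δ-minimal rational security set `B` of a
coalition `S` is secured under the coalition-optimal security strategy of
`S ∪ B`: any optimal secured set `W` of the coalition `S ∪ B` contains `B`. -/
theorem minimal_rational_security_set_secured {V : Type*} [Fintype V] [DecidableEq V]
    (A : V → V → Prop) [DecidableRel A] (θ L : V → ℝ) (ξ : V → V → ℝ)
    (hθ : ∀ i, 0 ≤ θ i) (hL : ∀ i, 0 ≤ L i) (hξ : ∀ i j, 0 ≤ ξ i j)
    (S B : Finset V) (δ δstar : ℕ) (hδ : 1 ≤ δ) (hδstar : δstar ≤ δ)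
    (hdisj : Disjoint B S) (hcard : B.card = δstar)
    (hrat : cCoal A θ L ξ (S ∪ B) < cCoal A θ L ξ S + ∑ v ∈ B, L v)
    (hmin : ∀ W : Finset V, Disjoint W S → W.card < δstar →
      ¬ (cCoal A θ L ξ (S ∪ W) < cCoal A θ L ξ S + ∑ v ∈ W, L v))
    (W : Finset V) (hWsub : W ⊆ S ∪ B)
    (hWopt : coalCost A θ L ξ (S ∪ B) W = cCoal A θ L ξ (S ∪ B)) :
    B ⊆ W :=
  minimal_rational_security_set_secured_general A θ L ξ S B δstar hdisj hcard hrat hmin W hWsub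
    hWopt
end

section
/- An |N|-agreeable ordering always exists when all players are secured under the network-optimal security strategy: if Υ(N) = N and S ⊊ N, then N \ S contains a rational security set, i.e., there exists V ⊆ N \ S, V ≠ ∅, with c(S ∪ V) < c(S) + Σ_{v∈V} L_v. -/
open Finset

/-- an |N|-agreeable ordering always exists when all players are
secured under the network-optimal security strategy.  If securing everyone is
strictly optimal for the grand coalition (`Υ(N) = N`), then every proper
coalition `S ⊊ N` admits a nonempty rational security set `V ⊆ N \ S`, i.e.
`c(S ∪ V) < c(S) + Σ_{v∈V} L v`. -/
theorem n_agreeable_exists {V : Type*} [Fintype V] [DecidableEq V]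
    (A : V → V → Prop) [DecidableRel A] (θ L : V → ℝ) (ξ : V → V → ℝ)
    (hθ : ∀ i, 0 < θ i) (hL : ∀ i, 0 < L i) (hξ : ∀ i j, 0 < ξ i j)
    -- securing all of `N` is strictly better than any other secured set:
    (hopt : ∀ W : Finset V, W ≠ Finset.univ →
      coalCost A θ L ξ Finset.univ Finset.univ < coalCost A θ L ξ Finset.univ W)
    (S : Finset V) (hS : S ≠ Finset.univ) :
    ∃ Vs : Finset V, Vs ⊆ Finset.univ \ S ∧ Vs.Nonempty ∧
      cCoal A θ L ξ (S ∪ Vs) < cCoal A θ L ξ S + ∑ v ∈ Vs, L v := by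
  refine ⟨Finset.univ \ S, le_refl _, ?_, ?_⟩
  · rw [Finset.sdiff_nonempty]
    exact fun h => hS (Finset.eq_univ_iff_forall.2 fun x => h (Finset.mem_univ x))
  have hunion : S ∪ (Finset.univ \ S) = Finset.univ := by
    rw [Finset.union_sdiff_self_eq_union]; simp
  rw [hunion]
  -- obtain the minimizer W for S
  obtain ⟨x, hx, hxeq⟩ := Finset.mem_image.1
    (Finset.min'_mem (S.powerset.image (coalCost A θ L ξ S))
      (Finset.Nonempty.image ⟨∅, Finset.empty_mem_powerset S⟩ _))
  have hWS : x ⊆ S := Finset.mem_powerset.1 hx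
  have hxne : x ≠ Finset.univ := by
    intro h; subst h
    exact hS (Finset.eq_univ_iff_forall.2 fun y => hWS (Finset.mem_univ y))
  have hcS : cCoal A θ L ξ S = coalCost A θ L ξ S x := hxeq.symm
  -- cCoal univ ≤ coalCost univ univ
  have h1 : cCoal A θ L ξ Finset.univ ≤ coalCost A θ L ξ Finset.univ Finset.univ :=
    Finset.min'_le _ _ (Finset.mem_image_of_mem _ (Finset.mem_powerset.2 (le_refl _)))
  have h2 := hopt x hxne
  -- coalCost univ x = coalCost S x + ∑_{univ\S} L
  have hsplit : (Finset.univ \ x : Finset V) = (S \ x) ∪ (Finset.univ \ S) := by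
    ext y; simp only [Finset.mem_sdiff, Finset.mem_union, Finset.mem_univ, true_and]
    constructor
    · intro hy
      by_cases hyS : y ∈ S
      · exact Or.inl ⟨hyS, hy⟩
      · exact Or.inr hyS
    · rintro (⟨_, h⟩ | h)
      · exact h
      · exact fun hyx => h (hWS hyx)
  have hdisj : Disjoint (S \ x) (Finset.univ \ S) := by
    rw [Finset.disjoint_right]
    intro y hy hy'
    exact (Finset.mem_sdiff.1 hy).2 (Finset.mem_sdiff.1 hy').1
  have h3 : coalCost A θ L ξ Finset.univ x
      = coalCost A θ L ξ S x + ∑ v ∈ Finset.univ \ S, L v := by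
    unfold coalCost
    rw [hsplit, Finset.sum_union hdisj]; ring
  calc cCoal A θ L ξ Finset.univ ≤ coalCost A θ L ξ Finset.univ Finset.univ := h1
    _ < coalCost A θ L ξ Finset.univ x := h2
    _ = cCoal A θ L ξ S + ∑ v ∈ Finset.univ \ S, L v := by rw [h3, hcS]
end

section
/- Under the sufficiently-large-penalty condition (L_i > θ_i + Σ_{j∈N⁻(i)} ξ_{ji} for all i), the Shapley value allocation Φ_i = θ_i + Σ_{j ∈ N⁻(i)} ξ_{ji}/2 − Σ_{j ∈ N⁺(i)} ξ_{ij}/2 lies in the core of the game c(S) = Σ_{i ∈ S}(θ_i + Σ_{j ∈ N⁻(i), j ∉ S} ξ_{ji}). -/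
open Finset

/-- Under sufficiently large penalties all coalition members secure themselves,
so the coalition cost is `c(S) = Σ_{i∈S}(θ_i + Σ_{j∈N⁻(i), j∉S} ξ_{ji})`. -/
noncomputable def cBig {V : Type*} [Fintype V] [DecidableEq V]
    (A : V → V → Prop) [DecidableRel A] (θ : V → ℝ) (ξ : V → V → ℝ)
    (S : Finset V) : ℝ :=
  ∑ i ∈ S, (θ i + ∑ j ∈ inN A i \ S, ξ j i)

/-- The Shapley value allocation under large penalties:
`Φ_i = θ_i + Σ_{j∈N⁻(i)} ξ_{ji}/2 − Σ_{j∈N⁺(i)} ξ_{ij}/2`. -/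
noncomputable def phiBig {V : Type*} [Fintype V] (A : V → V → Prop) [DecidableRel A]
    (θ : V → ℝ) (ξ : V → V → ℝ) (i : V) : ℝ :=
  θ i + (∑ j ∈ inN A i, ξ j i) / 2 - (∑ j ∈ outN A i, ξ i j) / 2

/-! Summing `Φ` over `S`, every arc inside `S` is counted with `+ξ/2` at its head and `-ξ/2` at
its tail, so only the arcs crossing the boundary of `S` survive: `Σ_S Φ - c(S)` is minus half
the total weight of those arcs. It vanishes for `S = N` and is nonpositive otherwise. -/

section Boundary

variable {V : Type*} [Fintype V] [DecidableEq V] (A : V → V → Prop) [DecidableRel A]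

noncomputable def boundaryWeight (ξ : V → V → ℝ) (S : Finset V) : ℝ :=
  ∑ i ∈ S, (∑ j ∈ inN A i \ S, ξ j i + ∑ j ∈ outN A i \ S, ξ i j)

theorem sum_sum_inN_inter_eq_sum_sum_outN_inter (ξ : V → V → ℝ) (S : Finset V) :
    ∑ i ∈ S, ∑ j ∈ inN A i ∩ S, ξ j i = ∑ i ∈ S, ∑ j ∈ outN A i ∩ S, ξ i j := by
  have hin : ∀ i, inN A i ∩ S = S.filter (A · i) := fun i => by ext; simp [inN, and_comm]
  have hout : ∀ i, outN A i ∩ S = S.filter (A i ·) := fun i => by ext; simp [outN, and_comm]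
  simp only [hin, hout, sum_filter]
  exact sum_comm

theorem boundaryWeight_univ (ξ : V → V → ℝ) : boundaryWeight A ξ univ = 0 := by
  simp [boundaryWeight, sdiff_eq_empty_iff_subset.mpr (subset_univ _)]

theorem boundaryWeight_nonneg {ξ : V → V → ℝ} (hξ : ∀ i j, 0 ≤ ξ i j) (S : Finset V) :
    0 ≤ boundaryWeight A ξ S :=
  sum_nonneg fun _ _ => add_nonneg (sum_nonneg fun _ _ => hξ _ _) (sum_nonneg fun _ _ => hξ _ _)

theorem sum_phiBig_sub_cBig (θ : V → ℝ) (ξ : V → V → ℝ) (S : Finset V) :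
    ∑ i ∈ S, phiBig A θ ξ i - cBig A θ ξ S = -boundaryWeight A ξ S / 2 := by
  have hin : ∀ i, ∑ j ∈ inN A i, ξ j i = ∑ j ∈ inN A i ∩ S, ξ j i + ∑ j ∈ inN A i \ S, ξ j i :=
    fun i => (sum_inter_add_sum_sdiff _ S _).symm
  have hout : ∀ i, ∑ j ∈ outN A i, ξ i j =
      ∑ j ∈ outN A i ∩ S, ξ i j + ∑ j ∈ outN A i \ S, ξ i j :=
    fun i => (sum_inter_add_sum_sdiff _ S _).symm
  have hinternal := sum_sum_inN_inter_eq_sum_sum_outN_inter A ξ S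
  simp only [phiBig, cBig, boundaryWeight, hin, hout, ← sum_div, sum_add_distrib,
    sum_sub_distrib] at hinternal ⊢
  linear_combination hinternal / 2

end Boundary

theorem shapley_in_core_large_penalties_general {V : Type*} [Fintype V] [DecidableEq V]
    (A : V → V → Prop) [DecidableRel A] (θ : V → ℝ) (ξ : V → V → ℝ)
    (hξ : ∀ i j, 0 ≤ ξ i j) :
    (∑ i, phiBig A θ ξ i = cBig A θ ξ Finset.univ) ∧
    (∀ S : Finset V, ∑ i ∈ S, phiBig A θ ξ i ≤ cBig A θ ξ S) := by
  refine ⟨?_, fun S => ?_⟩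
  · have h := sum_phiBig_sub_cBig A θ ξ univ
    rw [boundaryWeight_univ] at h
    linarith
  · have h := sum_phiBig_sub_cBig A θ ξ S
    have := boundaryWeight_nonneg A hξ S
    linarith

/-- under the large-penalty condition
`L i > θ i + Σ_{j∈N⁻(i)} ξ_{ji}` for all `i`, the Shapley value allocation
`Φ_i = θ_i + Σ_{j∈N⁻(i)} ξ_{ji}/2 − Σ_{j∈N⁺(i)} ξ_{ij}/2` is efficient and
lies in the core of the game `c(S) = Σ_{i∈S}(θ_i + Σ_{j∈N⁻(i), j∉S} ξ_{ji})`. -/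
theorem shapley_in_core_large_penalties {V : Type*} [Fintype V] [DecidableEq V]
    (A : V → V → Prop) [DecidableRel A] (θ L : V → ℝ) (ξ : V → V → ℝ)
    (hθ : ∀ i, 0 ≤ θ i) (hξ : ∀ i j, 0 ≤ ξ i j)
    (hbig : ∀ i, θ i + ∑ j ∈ inN A i, ξ j i < L i) :
    (∑ i, phiBig A θ ξ i = cBig A θ ξ Finset.univ) ∧
    (∀ S : Finset V, ∑ i ∈ S, phiBig A θ ξ i ≤ cBig A θ ξ S) :=
  shapley_in_core_large_penalties_general A θ ξ hξ
end
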